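/- Newton's inequalities: for nonnegative reals α_1, …, α_n, and 1 ≤ k ≤ n-1, one has (σ_k/C(n,k))^2 ≥ (σ_{k-1}/C(n,k-1)) · (σ_{k+1}/C(n,k+1)), where σ_k is the k-th elementary symmetric polynomial of α_1,…,α_n and C(n,k) is the binomial coefficient. -/

import Mathlib

/-!
Write `E_k = σ_k / C(n, k)` for the normalized elementary symmetric means of a multiset of `n`
reals. The roots of the derivative of `∏ (X - r)` are real by Rolle's theorem and have the same
means `E_0, …, E_{n-1}`, so `E_k E_{k+2} ≤ E_{k+1}²` reduces to multisets of `k + 2` numbers.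
If one of them is zero then `E_{k+2} = 0`. Otherwise passing to the reciprocals turns `E_j` into
`E_{k+2-j} / E_{k+2}`, and the inequality becomes `E_2 ≤ E_1²`, which reduces in the same way to
two numbers, where it is AM–GM.
-/

open Polynomial

theorem Polynomial.card_roots_derivative_eq_natDegree {p : ℝ[X]}
    (hp : Multiset.card p.roots = p.natDegree) :
    Multiset.card (derivative p).roots = (derivative p).natDegree := by
  have := card_roots_le_derivative p
  have := natDegree_derivative_le p
  have := card_roots' (derivative p)
  omega

namespace Multiset

section CommSemiring

variable {R : Type*} [CommSemiring R]

@[simp]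
theorem esymm_zero (s : Multiset R) : s.esymm 0 = 1 := by
  simp [esymm]

theorem esymm_cons_succ (a : R) (s : Multiset R) (k : ℕ) :
    (a ::ₘ s).esymm (k + 1) = s.esymm (k + 1) + a * s.esymm k := by
  simp [esymm, powersetCard_cons, sum_map_mul_left]

theorem esymm_eq_zero_of_card_lt {s : Multiset R} {k : ℕ} (h : card s < k) : s.esymm k = 0 := by
  simp [esymm, powersetCard_eq_empty _ h]

theorem esymm_card (s : Multiset R) : s.esymm (card s) = s.prod := by
  simp [esymm, powersetCard_self]

end CommSemiring

section Field

variable {K : Type*} [Field K]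

theorem esymm_map_inv_mul_prod {s : Multiset K} (hs : (0 : K) ∉ s) {i j : ℕ}
    (hij : i + j = card s) : (s.map (·⁻¹)).esymm i * s.prod = s.esymm j := by
  induction s using Multiset.induction_on generalizing i j with
  | empty => simp_all
  | cons a s ih =>
    rw [mem_cons, not_or] at hs
    have ha : a ≠ 0 := Ne.symm hs.1
    rw [card_cons] at hij
    rw [map_cons, prod_cons]
    rcases i with _ | i <;> rcases j with _ | j
    · omega
    · rw [esymm_cons_succ, esymm_eq_zero_of_card_lt (by omega : card s < j + 1),
        ← ih hs.2 (by omega : 0 + j = _)]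
      simp
    · rw [esymm_cons_succ,
        esymm_eq_zero_of_card_lt (by simp; omega : card (s.map (·⁻¹)) < i + 1), zero_add,
        esymm_zero (a ::ₘ s), ← esymm_zero s, ← ih hs.2 (by omega : i + 0 = _)]
      field_simp
    · rw [esymm_cons_succ, esymm_cons_succ, ← ih hs.2 (by omega : i + 1 + j = _),
        ← ih hs.2 (by omega : i + (j + 1) = _)]
      field_simp
      ring

noncomputable def esymmMean (s : Multiset K) (k : ℕ) : K :=
  s.esymm k / (card s).choose k

@[simp]
theorem esymmMean_zero (s : Multiset K) : s.esymmMean 0 = 1 := by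
  simp [esymmMean]

theorem esymmMean_map_inv_mul_prod {s : Multiset K} (hs : (0 : K) ∉ s) {i j : ℕ}
    (hij : i + j = card s) : (s.map (·⁻¹)).esymmMean i * s.prod = s.esymmMean j := by
  rw [esymmMean, esymmMean, card_map, Nat.choose_symm_of_eq_add hij.symm, div_mul_eq_mul_div,
    esymm_map_inv_mul_prod hs hij]

end Field

/-- `t` is the multiset of roots of the derivative of `∏ (X - r)`. -/
theorem exists_esymm_roots_derivative (s : Multiset ℝ) {n : ℕ} (hs : card s = n + 1) :
    ∃ t : Multiset ℝ, card t = n ∧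
      ∀ j ≤ n, ((n + 1 - j : ℕ) : ℝ) * s.esymm j = (n + 1) * t.esymm j := by
  set f : ℝ[X] := (s.map fun r => X - C r).prod
  have hfcoeff : ∀ j ≤ n + 1, f.coeff (n + 1 - j) = (-1) ^ j * s.esymm j := fun j hj => by
    rw [prod_X_sub_C_coeff s (by omega), hs, Nat.sub_sub_self hj]
  have hgcoeff : ∀ j ≤ n,
      (derivative f).coeff (n - j) = (-1) ^ j * s.esymm j * (n + 1 - j : ℕ) := fun j hj => by
    rw [coeff_derivative, show n - j + 1 = n + 1 - j by omega, hfcoeff j (by omega),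
      show n + 1 - j = n - j + 1 by omega]
    push_cast
    ring
  have hlead : (derivative f).coeff n = n + 1 := by
    simpa using hgcoeff 0 (Nat.zero_le n)
  have hdeg : (derivative f).natDegree = n := by
    refine le_antisymm ?_ (le_natDegree_of_ne_zero (by rw [hlead]; positivity))
    have := natDegree_derivative_le f
    rw [natDegree_multiset_prod_X_sub_C_eq_card, hs] at this
    omega
  have hroots := card_roots_derivative_eq_natDegree (p := f) (by
    rw [roots_multiset_prod_X_sub_C, natDegree_multiset_prod_X_sub_C_eq_card])
  refine ⟨(derivative f).roots, by rw [hroots, hdeg], fun j hj => ?_⟩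
  have hvieta := coeff_eq_esymm_roots_of_card hroots (k := n - j) (by omega)
  rw [hgcoeff j hj, leadingCoeff, hdeg, hlead, Nat.sub_sub_self hj] at hvieta
  have hsign : (-1 : ℝ) ^ j * (-1) ^ j = 1 := by rw [← mul_pow]; norm_num
  linear_combination (-1 : ℝ) ^ j * hvieta -
    ((n + 1 - j : ℕ) * s.esymm j - (n + 1) * (derivative f).roots.esymm j) * hsign

theorem exists_card_eq_pred_esymmMean_eq (s : Multiset ℝ) {n : ℕ} (hs : card s = n + 1) :
    ∃ t : Multiset ℝ, card t = n ∧ ∀ j ≤ n, t.esymmMean j = s.esymmMean j := by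
  obtain ⟨t, ht, hst⟩ := exists_esymm_roots_derivative s hs
  refine ⟨t, ht, fun j hj => ?_⟩
  have hchoose : ((n.choose j : ℕ) : ℝ) * (n + 1) = (n + 1).choose j * (n + 1 - j : ℕ) := by
    exact_mod_cast Nat.choose_mul_succ_eq n j
  have : (0 : ℝ) < n.choose j := by norm_cast; exact Nat.choose_pos hj
  have : (0 : ℝ) < (n + 1).choose j := by norm_cast; exact Nat.choose_pos (by omega)
  rw [esymmMean, esymmMean, ht, hs, div_eq_div_iff (by positivity) (by positivity)]
  refine mul_left_cancel₀ (by positivity : (n + 1 : ℝ) ≠ 0) ?_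
  linear_combination -((n + 1).choose j : ℝ) * hst j hj - s.esymm j * hchoose

theorem exists_card_eq_esymmMean_eq (s : Multiset ℝ) {m : ℕ} (hm : m ≤ card s) :
    ∃ t : Multiset ℝ, card t = m ∧ ∀ j ≤ m, t.esymmMean j = s.esymmMean j := by
  obtain ⟨d, hd⟩ := Nat.exists_eq_add_of_le hm
  induction d generalizing s with
  | zero => exact ⟨s, hd, fun _ _ => rfl⟩
  | succ d ih =>
    obtain ⟨t, ht, hts⟩ := exists_card_eq_pred_esymmMean_eq s (n := m + d) hd
    obtain ⟨u, hu, hut⟩ := ih t (by omega) ht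
    exact ⟨u, hu, fun j hj => (hut j hj).trans (hts j (by omega))⟩

theorem esymmMean_two_le_sq_of_card_eq_two {s : Multiset ℝ} (hs : card s = 2) :
    s.esymmMean 2 ≤ s.esymmMean 1 ^ 2 := by
  obtain ⟨x, y, rfl⟩ := card_eq_two.mp hs
  simp only [esymmMean, insert_eq_cons, esymm_pair_one, esymm_pair_two]
  norm_num
  nlinarith [sq_nonneg (x - y)]

theorem esymmMean_two_le_sq {s : Multiset ℝ} (hs : 2 ≤ card s) :
    s.esymmMean 2 ≤ s.esymmMean 1 ^ 2 := by
  obtain ⟨t, ht, hts⟩ := exists_card_eq_esymmMean_eq s hs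
  rw [← hts 1 (by norm_num), ← hts 2 le_rfl]
  exact esymmMean_two_le_sq_of_card_eq_two ht

theorem esymmMean_mul_esymmMean_le_sq_of_card_eq {s : Multiset ℝ} {k : ℕ}
    (hs : card s = k + 2) :
    s.esymmMean k * s.esymmMean (k + 2) ≤ s.esymmMean (k + 1) ^ 2 := by
  by_cases h0 : (0 : ℝ) ∈ s
  · have hP : s.esymmMean (k + 2) = 0 := by
      rw [esymmMean, ← hs, esymm_card, prod_eq_zero h0, zero_div]
    rw [hP, mul_zero]
    positivity
  · set P := s.prod
    have hinv := esymmMean_two_le_sq (s := s.map (·⁻¹)) (by simp [hs])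
    rw [← esymmMean_map_inv_mul_prod h0 (by omega : 2 + k = _),
      ← esymmMean_map_inv_mul_prod h0 (by omega : 1 + (k + 1) = _),
      ← esymmMean_map_inv_mul_prod h0 (by omega : 0 + (k + 2) = _), esymmMean_zero]
    calc _ = P ^ 2 * (s.map (·⁻¹)).esymmMean 2 := by ring
      _ ≤ P ^ 2 * (s.map (·⁻¹)).esymmMean 1 ^ 2 := by gcongr
      _ = _ := by ring

theorem esymmMean_mul_esymmMean_le_sq {s : Multiset ℝ} {k : ℕ} (hk : k + 2 ≤ card s) :
    s.esymmMean k * s.esymmMean (k + 2) ≤ s.esymmMean (k + 1) ^ 2 := by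
  obtain ⟨t, ht, hts⟩ := exists_card_eq_esymmMean_eq s hk
  rw [← hts k (by omega), ← hts (k + 1) (by omega), ← hts (k + 2) le_rfl]
  exact esymmMean_mul_esymmMean_le_sq_of_card_eq ht

end Multiset

theorem stmt2_general (n : ℕ) (α : ℕ → ℝ)
    (σ : ℕ → ℝ)
    (hσ : ∀ k : ℕ, σ k = ∑ s ∈ (Finset.range n).powersetCard k, ∏ i ∈ s, α i)
    (k : ℕ) (hk1 : 1 ≤ k) (hkn : k ≤ n - 1) :
    (σ (k - 1) / (n.choose (k - 1) : ℝ)) * (σ (k + 1) / (n.choose (k + 1) : ℝ)) ≤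
      (σ k / (n.choose k : ℝ)) ^ 2 := by
  obtain ⟨k, rfl⟩ : ∃ j, k = j + 1 := ⟨k - 1, by omega⟩
  set s := (Finset.range n).val.map α
  have hs : Multiset.card s = n := by simp [s]
  have hmean : ∀ j, σ j / n.choose j = s.esymmMean j := fun j => by
    rw [hσ, Multiset.esymmMean, hs, Finset.esymm_map_val]
  rw [hmean, hmean, hmean, add_tsub_cancel_right]
  exact Multiset.esymmMean_mul_esymmMean_le_sq (by omega)

/-- Newton's inequalities for elementary symmetric polynomials of nonnegative reals. -/
theorem stmt2 (n : ℕ) (α : ℕ → ℝ) (hnonneg : ∀ i ∈ Finset.range n, 0 ≤ α i)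
    (σ : ℕ → ℝ)
    (hσ : ∀ k : ℕ, σ k = ∑ s ∈ (Finset.range n).powersetCard k, ∏ i ∈ s, α i)
    (k : ℕ) (hk1 : 1 ≤ k) (hkn : k ≤ n - 1) :
    (σ (k - 1) / (n.choose (k - 1) : ℝ)) * (σ (k + 1) / (n.choose (k + 1) : ℝ)) ≤
      (σ k / (n.choose k : ℝ)) ^ 2 :=
  stmt2_general n α σ hσ k hk1 hkn
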